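/- arXiv:1009.1672 — 7 statements merged into one kernel-verified Lean document; each statement's English description precedes it below -/
import Mathlib

section
/- Let q be an odd prime power. Then there exists γ in the finite field 𝔽_q with q elements such that both γ and 1 − 4γ are nonsquares in 𝔽_q. -/
open Finset in
/-- In a finite field of odd characteristic there is `s` with `s` and `1 - s` both nonsquares. -/
theorem exists_nonsquare_one_sub_aux (F : Type*) [Field F] [Fintype F]
    (hchar : ringChar F ≠ 2) : ∃ s : F, ¬ IsSquare s ∧ ¬ IsSquare (1 - s) := by
  classical
  by_contra hcon
  push_neg at hcon
  obtain ⟨g, hg⟩ := FiniteField.exists_nonsquare (F := F) hchar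
  have hg0 : g ≠ 0 := fun h => hg (h ▸ IsSquare.zero)
  set N : Finset F := univ.filter (fun x => ¬ IsSquare x) with hN
  have hmemN : ∀ x : F, x ∈ N ↔ ¬ IsSquare x := by
    intro x; simp [hN]
  have hgN : g ∈ N := (hmemN g).2 hg
  -- the map x ↦ g * (1 - x) maps N into N
  have hmaps : ∀ x ∈ N, g * (1 - x) ∈ N := by
    intro x hx
    have hxns : ¬ IsSquare x := (hmemN x).1 hx
    have hsq : IsSquare (1 - x) := hcon x hxns
    have hne : (1 - x) ≠ 0 := by
      intro h
      apply hxns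
      have : x = 1 := by linear_combination -h
      exact this ▸ IsSquare.one
    rw [hmemN]
    intro hsq2
    apply hg
    obtain ⟨c, hc⟩ := hsq
    obtain ⟨d, hd⟩ := hsq2
    have hc0 : c ≠ 0 := by
      intro h; apply hne; rw [hc, h, mul_zero]
    refine ⟨d * c⁻¹, ?_⟩
    field_simp
    linear_combination hd - g * hc
  have hinj : ∀ x₁ x₂, x₁ ∈ N → x₂ ∈ N → g * (1 - x₁) = g * (1 - x₂) → x₁ = x₂ := by
    intro x₁ x₂ _ _ h
    have := mul_left_cancel₀ hg0 h
    linear_combination -this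
  have hsurj := Finset.surj_on_of_inj_on_of_card_le (s := N) (t := N)
    (fun a _ => g * (1 - a)) hmaps (fun a₁ a₂ h₁ h₂ => hinj a₁ a₂ h₁ h₂) le_rfl
  obtain ⟨s, hsN, hs⟩ := hsurj g hgN
  have h1 : (1 - s) = 1 := mul_left_cancel₀ hg0 (by rw [mul_one]; exact hs.symm)
  have hs0 : s = 0 := by linear_combination -h1
  exact (hmemN s).1 hsN (hs0 ▸ IsSquare.zero)

/-- For odd prime power `q` there is `γ ∈ 𝔽_q` with both `γ` and `1 - 4γ` nonsquares. -/
theorem exists_nonsquare_gamma_odd (q : ℕ) (hq : IsPrimePow q) (hodd : Odd q)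
    (F : Type*) [Field F] (hF : Nat.card F = q) :
    ∃ γ : F, ¬ IsSquare γ ∧ ¬ IsSquare (1 - 4 * γ) := by
  classical
  have hq0 : q ≠ 0 := hq.pos.ne'
  have hfin : Finite F := Nat.finite_of_card_ne_zero (hF ▸ hq0)
  have : Fintype F := Fintype.ofFinite F
  have hcard : Fintype.card F = q := by rw [← Nat.card_eq_fintype_card, hF]
  have hchar : ringChar F ≠ 2 := by
    intro h
    have := FiniteField.even_card_of_char_two h
    rw [hcard] at this
    rw [Nat.odd_iff] at hodd
    omega
  have h2 : (2 : F) ≠ 0 := Ring.two_ne_zero hchar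
  have h4 : (4 : F) ≠ 0 := by
    intro h
    apply h2
    have : (2 : F) * 2 = 0 := by rw [← h]; norm_num
    rcases mul_eq_zero.1 this with h | h <;> exact h
  obtain ⟨s, hs, h1s⟩ := exists_nonsquare_one_sub_aux F hchar
  refine ⟨(1 - s) / 4, ?_, ?_⟩
  · intro hsq
    apply h1s
    obtain ⟨b, hb⟩ := hsq
    refine ⟨2 * b, ?_⟩
    field_simp at hb
    linear_combination hb
  · have : 1 - 4 * ((1 - s) / 4) = s := by field_simp; ring
    rw [this]
    exact hs
end

section
/- Let R be a commutative ring of characteristic 2 and define T : R → R by T(x) = x² + x. Then for every natural number i and every x ∈ R, the 2^i-fold iterate of T satisfies T^{(2^i)}(x) = x^{2^{2^i}} + x. -/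
lemma char2_add_sq {R : Type*} [CommRing R] (h2 : (2 : R) = 0) (a b : R) :
    (a + b) ^ 2 = a ^ 2 + b ^ 2 := by
  have : (2 : R) * (a * b) = 0 := by rw [h2]; ring
  ring_nf
  ring_nf at this
  linear_combination this

lemma char2_add_pow2 {R : Type*} [CommRing R] (h2 : (2 : R) = 0) (k : ℕ) (a b : R) :
    (a + b) ^ 2 ^ k = a ^ 2 ^ k + b ^ 2 ^ k := by
  induction k with
  | zero => simp
  | succ k ih =>
    rw [pow_succ, pow_mul, pow_mul, pow_mul, ih, char2_add_sq h2]

/-- In a commutative ring of characteristic 2, the `2^i`-fold iterate of `T(x) = x² + x`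
is `x ↦ x^(2^(2^i)) + x`. -/
theorem iterate_artin_schreier_map (R : Type*) [CommRing R] (h2 : (2 : R) = 0)
    (T : R → R) (hT : ∀ x, T x = x ^ 2 + x) (i : ℕ) (x : R) :
    T^[2 ^ i] x = x ^ 2 ^ 2 ^ i + x := by
  induction i generalizing x with
  | zero => simpa using hT x
  | succ i ih =>
    have h : (2 : ℕ) ^ (i + 1) = 2 ^ i + 2 ^ i := by ring
    rw [h, Function.iterate_add_apply, ih, ih]
    have hN : (x ^ 2 ^ 2 ^ i + x) ^ 2 ^ 2 ^ i
        = x ^ 2 ^ 2 ^ (i + 1) + x ^ 2 ^ 2 ^ i := by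
      rw [char2_add_pow2 h2, ← pow_mul, ← pow_add]
      congr 2
      ring
    rw [hN]
    have : (2 : R) * x ^ 2 ^ 2 ^ i = 0 := by rw [h2]; ring
    linear_combination this
end

section
/- Let q be a prime power, K the finite field with q^2 elements, σ its automorphism x ↦ x^q, and V a finite-dimensional vector space over K. Let β : V × V → K be a nonzero Hermitian sesquilinear form, i.e., β is additive in each argument, β(au, v) = a·β(u, v), β(u, av) = σ(a)·β(u, v), and β(v, u) = σ(β(u, v)) for all u, v ∈ V and a ∈ K. Then there exists w ∈ V with β(w, w) ≠ 0. -/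
/-- A nonzero Hermitian sesquilinear form on a finite-dimensional vector space over `𝔽_{q²}`
admits an anisotropic vector. -/
theorem hermitian_form_exists_anisotropic (q : ℕ) (hq : IsPrimePow q)
    (K : Type*) [Field K] (hK : Nat.card K = q ^ 2)
    (V : Type*) [AddCommGroup V] [Module K V] [FiniteDimensional K V]
    (β : V → V → K)
    (hadd₁ : ∀ u v w : V, β (u + v) w = β u w + β v w)
    (hadd₂ : ∀ u v w : V, β u (v + w) = β u v + β u w)
    (hsmul₁ : ∀ (a : K) (u v : V), β (a • u) v = a * β u v)
    (hsmul₂ : ∀ (a : K) (u v : V), β u (a • v) = a ^ q * β u v)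
    (hherm : ∀ u v : V, β v u = (β u v) ^ q)
    (hne : ∃ u v : V, β u v ≠ 0) :
    ∃ w : V, β w w ≠ 0 := by
  by_contra h
  push_neg at h
  obtain ⟨u, v, huv⟩ := hne
  have hq2 : 2 ≤ q := hq.two_le
  have hfin : Finite K := Nat.finite_of_card_ne_zero (by rw [hK]; positivity)
  have : Fintype K := Fintype.ofFinite K
  have : DecidableEq K := Classical.decEq K
  have ha : ∃ a : K, a ^ q ≠ a := by
    by_contra hall
    push_neg at hall
    have hdeg : (Polynomial.X ^ q - Polynomial.X : Polynomial K).natDegree = q := by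
      compute_degree!
      · rw [if_neg (by omega : ¬ 1 = q)]
        simp
      · omega
    have hpne : (Polynomial.X ^ q - Polynomial.X : Polynomial K) ≠ 0 := by
      intro h0
      rw [h0] at hdeg
      simp at hdeg
      omega
    have hsub : (Finset.univ : Finset K) ⊆
        ((Polynomial.X ^ q - Polynomial.X : Polynomial K).roots.toFinset) := by
      intro a _
      simp only [Multiset.mem_toFinset, Polynomial.mem_roots, hpne, ne_eq,
        not_false_eq_true, Polynomial.IsRoot.def, Polynomial.eval_sub,
        Polynomial.eval_pow, Polynomial.eval_X, true_and]
      rw [hall a, sub_self]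
    have h1 : Fintype.card K ≤ q := by
      calc Fintype.card K = (Finset.univ : Finset K).card := rfl
        _ ≤ _ := Finset.card_le_card hsub
        _ ≤ Multiset.card (Polynomial.X ^ q - Polynomial.X : Polynomial K).roots :=
            Multiset.toFinset_card_le _
        _ ≤ _ := Polynomial.card_roots' _
        _ = q := hdeg
    rw [← Nat.card_eq_fintype_card, hK] at h1
    nlinarith
  obtain ⟨a, ha⟩ := ha
  have hskew : β v u = - β u v := by
    have h0 := h (u + v)
    rw [hadd₁, hadd₂, hadd₂, h u, h v] at h0
    linear_combination h0
  have h1 := h (a • u + v)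
  rw [hadd₁, hadd₂, hadd₂, hsmul₁, hsmul₁, hsmul₂, hsmul₂, h u, h v, hskew] at h1
  have h2 : (a - a ^ q) * β u v = 0 := by linear_combination h1
  rcases mul_eq_zero.mp h2 with h3 | h3
  · exact ha (by linear_combination -h3)
  · exact huv h3
end

section
/- Let q be a prime power, K the finite field with q^2 elements, and σ its automorphism x ↦ x^q. Let A be any d × d matrix over K that is Hermitian, i.e., A equals the σ-conjugate transpose A^{σT} (the transpose of the matrix obtained by applying σ to each entry). Then there exists an invertible d × d matrix S over K such that S·A·S^{σT} is a diagonal matrix. -/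
open Matrix

section Aux

variable {K : Type*} [Field K] [StarRing K]

private lemma stdBasis_conjT {n : Type} [DecidableEq n] (i j : n) (t : K) :
    (Matrix.single i j t)ᴴ = Matrix.single j i (star t) := by
  ext a b
  by_cases h1 : j = a <;> by_cases h2 : i = b <;>
    simp [Matrix.conjTranspose_apply, Matrix.single, h1, h2]

/-- Abstract diagonalisation of Hermitian matrices over a field with a star
structure, assuming nondegeneracy of the "trace" form. -/
private theorem herm_diag_aux
    (htr : ∀ a : K, a ≠ 0 → ∃ t : K, t * star a + star t * a ≠ 0) (N : ℕ) :
    ∀ (n : Type) [Fintype n] [DecidableEq n], Fintype.card n ≤ N →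
      ∀ A : Matrix n n K, A.IsHermitian →
        ∃ S : Matrix n n K, IsUnit S ∧ (S * A * Sᴴ).IsDiag := by
  induction N with
  | zero =>
    intro n _ _ hcard A _
    have hempty : IsEmpty n := Fintype.card_eq_zero_iff.mp (Nat.le_zero.mp hcard)
    exact ⟨1, isUnit_one, fun i j _ => (hempty.false i).elim⟩
  | succ N ih =>
    intro n _ _ hcard A hAh
    by_cases hA0 : A = 0
    · exact ⟨1, isUnit_one, by simp [hA0]⟩
    -- Step 1: find a unit E and index i with nonzero (E*A*Eᴴ) i i
    have key : ∃ E : Matrix n n K, IsUnit E ∧ ∃ i, (E * A * Eᴴ) i i ≠ 0 := by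
      by_cases hdiag : ∃ i, A i i ≠ 0
      · obtain ⟨i, hi⟩ := hdiag
        exact ⟨1, isUnit_one, i, by simpa using hi⟩
      · push_neg at hdiag
        obtain ⟨i, j, hij⟩ : ∃ i j, A i j ≠ 0 := by
          by_contra h
          push_neg at h
          exact hA0 (Matrix.ext fun i j => h i j)
        have hne : i ≠ j := by rintro rfl; exact hij (hdiag i)
        obtain ⟨t, ht⟩ := htr (A i j) hij
        set S := Matrix.single i j t with hSdef
        have hSS : S * S = 0 := Matrix.single_mul_single_of_ne t i j i hne.symm t
        refine ⟨1 + S, ?_, i, ?_⟩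
        · have hmul : (1 + S) * (1 - S) = 1 := by
            rw [mul_sub, mul_one, add_mul, one_mul, hSS, add_zero]
            simp
          have := invertibleOfRightInverse (h := hmul)
          exact isUnit_of_invertible _
        · have hEH : (1 + S)ᴴ = 1 + Matrix.single j i (star t) := by
            rw [conjTranspose_add, conjTranspose_one, hSdef, stdBasis_conjT]
          have hAji : star (A i j) = A j i := hAh.apply j i
          rw [hEH]
          have hexp : (1 + S) * A * (1 + Matrix.single j i (star t)) =
              A + S * A + (A * Matrix.single j i (star t)
                + S * A * Matrix.single j i (star t)) := by
            noncomm_ring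
          rw [hexp]
          have e1 : (S * A) i i = t * A j i := by
            rw [hSdef]; exact Matrix.single_mul_apply_same t i j i A
          have e2 : (A * Matrix.single j i (star t)) i i = A i j * star t :=
            Matrix.mul_single_apply_same (star t) j i i A
          have e3 : (S * A * Matrix.single j i (star t)) i i
              = (S * A) i j * star t :=
            Matrix.mul_single_apply_same (star t) j i i (S * A)
          have e4 : (S * A) i j = t * A j j := by
            rw [hSdef]; exact Matrix.single_mul_apply_same t i j j A
          simp only [Matrix.add_apply, e1, e2, e3, e4, hdiag i, hdiag j,
            mul_zero, zero_mul, add_zero, zero_add]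
          intro hcon
          apply ht
          rw [hAji, mul_comm (star t) (A i j)]
          exact hcon
    obtain ⟨E, hE, i, hBii⟩ := key
    set B := E * A * Eᴴ with hBdef
    have hB : B.IsHermitian := Matrix.isHermitian_mul_mul_conjTranspose E hAh
    -- Step 2: reindex so that i corresponds to the first block
    let n' := {k : n // k ≠ i}
    let e : Unit ⊕ n' ≃ n :=
      { toFun := fun x => Sum.elim (fun _ => i) Subtype.val x
        invFun := fun k => if h : k = i then Sum.inl () else Sum.inr ⟨k, h⟩
        left_inv := by
          rintro (u | ⟨k, hk⟩)
          · simp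
          · simp [hk]
        right_inv := by intro k; by_cases h : k = i <;> simp [h] }
    set C := B.submatrix e e with hCdef
    have hC : C.IsHermitian := hB.submatrix e
    have hc0 : C (Sum.inl ()) (Sum.inl ()) ≠ 0 := hBii
    set c := C (Sum.inl ()) (Sum.inl ()) with hcdef
    have hcstar : star c = c := hC.apply _ _
    -- blocks of C
    set a : Matrix Unit Unit K := Matrix.of fun _ _ => c with hadef
    set b : Matrix Unit n' K := Matrix.of fun _ k => C (Sum.inl ()) (Sum.inr k) with hbdef
    set bl : Matrix n' Unit K := Matrix.of fun k _ => C (Sum.inr k) (Sum.inl ()) with hbldef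
    set D : Matrix n' n' K := Matrix.of fun k l => C (Sum.inr k) (Sum.inr l) with hDdef
    have hCblocks : C = Matrix.fromBlocks a b bl D := by
      ext (u | k) (v | l) <;> rfl
    have hblb : ∀ k, bl k () = star (b () k) := by
      intro k
      rw [hbldef, hbdef]
      exact (hC.apply (Sum.inr k) (Sum.inl ())).symm
    set g : Matrix n' Unit K := Matrix.of fun k _ => -(bl k ()) * c⁻¹ with hgdef
    set F := Matrix.fromBlocks (1 : Matrix Unit Unit K) 0 g (1 : Matrix n' n' K) with hFdef
    have hFH : Fᴴ = Matrix.fromBlocks (1 : Matrix Unit Unit K) gᴴ 0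
        (1 : Matrix n' n' K) := by
      rw [hFdef, Matrix.fromBlocks_conjTranspose]
      simp
    have hga : g * a + bl = 0 := by
      ext k u
      have : (g * a) k u = (-(bl k ()) * c⁻¹) * c := by
        simp [Matrix.mul_apply, hgdef, hadef]
      rw [Matrix.add_apply, this, Matrix.zero_apply, mul_assoc,
        inv_mul_cancel₀ hc0, mul_one]
      have hu : u = () := rfl
      rw [hu]
      ring
    have htop : a * gᴴ + b = 0 := by
      ext u k
      have h1 : (a * gᴴ) u k = c * star (-(bl k ()) * c⁻¹) := by
        simp [Matrix.mul_apply, hgdef, hadef, Matrix.conjTranspose_apply]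
      have h2 : b u k = b () k := rfl
      rw [Matrix.add_apply, h1, h2, Matrix.zero_apply, hblb k,
        StarMul.star_mul, star_neg, star_star, star_inv₀, hcstar]
      field_simp
      ring
    have hM : F * C * Fᴴ = Matrix.fromBlocks a 0 0 (g * b + D) := by
      rw [hCblocks, hFH, hFdef, Matrix.fromBlocks_multiply, Matrix.fromBlocks_multiply]
      simp only [Matrix.one_mul, Matrix.zero_mul, Matrix.mul_one, Matrix.mul_zero,
        add_zero, zero_add]
      rw [hga, htop]
      simp
    have hd' : (g * b + D).IsHermitian := by
      have h1 := Matrix.isHermitian_mul_mul_conjTranspose F hC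
      rw [hM] at h1
      ext k l
      have h2 := congrFun (congrFun h1.eq (Sum.inr k)) (Sum.inr l)
      simpa [Matrix.conjTranspose_apply] using h2
    have hcn : 1 + Fintype.card n' = Fintype.card n := by
      simpa using (Fintype.card_congr e)
    have hcard' : Fintype.card n' ≤ N := by omega
    obtain ⟨S', hS'u, hS'diag⟩ := ih n' hcard' (g * b + D) hd'
    set G := Matrix.fromBlocks (1 : Matrix Unit Unit K) 0 0 S' * F with hGdef
    have hGC : G * C * Gᴴ =
        Matrix.fromBlocks a 0 0 (S' * (g * b + D) * S'ᴴ) := by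
      have h1 : G * C * Gᴴ = Matrix.fromBlocks (1 : Matrix Unit Unit K) 0 0 S' *
          (F * C * Fᴴ) * (Matrix.fromBlocks (1 : Matrix Unit Unit K) 0 0 S')ᴴ := by
        rw [hGdef, Matrix.conjTranspose_mul]
        simp only [Matrix.mul_assoc]
      rw [h1, hM, Matrix.fromBlocks_conjTranspose, Matrix.fromBlocks_multiply,
        Matrix.fromBlocks_multiply]
      simp [Matrix.mul_assoc]
    have hGdiag : (G * C * Gᴴ).IsDiag := by
      rw [hGC]
      exact Matrix.IsDiag.fromBlocks
        (fun u v huv => absurd (Subsingleton.elim u v) huv) hS'diag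
    have hFu : IsUnit F := by
      have hmul : F * Matrix.fromBlocks 1 0 (-g) 1 = 1 := by
        rw [hFdef, Matrix.fromBlocks_multiply]
        simp [Matrix.fromBlocks_one]
      have := invertibleOfRightInverse (h := hmul)
      exact isUnit_of_invertible _
    have hGu : IsUnit G := by
      obtain ⟨iS'⟩ := hS'u.nonempty_invertible
      have hmul2 : Matrix.fromBlocks (1 : Matrix Unit Unit K) 0 0 S' *
          Matrix.fromBlocks 1 0 0 (⅟S') = 1 := by
        rw [Matrix.fromBlocks_multiply]
        simp [Matrix.fromBlocks_one]
      have := invertibleOfRightInverse (h := hmul2)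
      exact (isUnit_of_invertible _).mul hFu
    -- transport back along e
    set S₀ := G.submatrix e.symm e.symm with hS₀def
    have hBC : B = C.submatrix e.symm e.symm := by
      rw [hCdef, Matrix.submatrix_submatrix, Equiv.self_comp_symm,
        Matrix.submatrix_id_id]
    have key2 : S₀ * B * S₀ᴴ = (G * C * Gᴴ).submatrix e.symm e.symm := by
      rw [hBC, hS₀def, Matrix.conjTranspose_submatrix, Matrix.submatrix_mul_equiv,
        Matrix.submatrix_mul_equiv]
    have hS₀u : IsUnit S₀ := (Matrix.isUnit_submatrix_equiv e.symm e.symm).mpr hGu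
    refine ⟨S₀ * E, hS₀u.mul hE, ?_⟩
    have hfin : S₀ * E * A * (S₀ * E)ᴴ = S₀ * B * S₀ᴴ := by
      rw [Matrix.conjTranspose_mul, hBdef]
      simp only [Matrix.mul_assoc]
    rw [hfin, key2]
    intro x y hxy
    exact hGdiag (e.symm.injective.ne hxy)

end Aux

/-- Any Hermitian matrix over `𝔽_{q²}` can be diagonalised by a congruence
`A ↦ S * A * S^{σT}`, where `σ : x ↦ x^q`. -/
theorem hermitian_matrix_diagonalizable (q : ℕ) (hq : IsPrimePow q)
    (K : Type*) [Field K] (hK : Nat.card K = q ^ 2)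
    (d : ℕ) (A : Matrix (Fin d) (Fin d) K)
    (hA : (A.map (· ^ q)).transpose = A) :
    ∃ S : Matrix (Fin d) (Fin d) K, IsUnit S ∧
      Matrix.IsDiag (S * A * (S.map (· ^ q)).transpose) := by
  have hq2 : 2 ≤ q := hq.two_le
  haveI : Finite K := Nat.finite_of_card_ne_zero (by rw [hK]; positivity)
  haveI : Fintype K := Fintype.ofFinite K
  have hcardK : Fintype.card K = q ^ 2 := by rw [← Nat.card_eq_fintype_card, hK]
  -- characteristic
  obtain ⟨p, m, hp, hm, hpmq⟩ := hq
  have hpp : p.Prime := Nat.prime_iff.mpr hp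
  haveI : Fact p.Prime := ⟨hpp⟩
  haveI hrc : CharP K (ringChar K) := ringChar.charP K
  obtain ⟨nn, hp', hcard'⟩ := FiniteField.card K (ringChar K)
  have hrcp : ringChar K = p := by
    have hdvd : ringChar K ∣ p ^ (m * 2) := by
      refine Dvd.intro_left (ringChar K ^ ((nn : ℕ) - 1)) ?_
      rw [← pow_succ, Nat.sub_add_cancel nn.pos, ← hcard', hcardK, ← hpmq,
        ← pow_mul]
    exact (Nat.prime_dvd_prime_iff_eq hp' hpp).mp (hp'.dvd_of_dvd_pow hdvd)
  haveI hcharp : CharP K p := hrcp ▸ hrc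
  have hpowcard : ∀ x : K, x ^ (q * q) = x := by
    intro x
    rw [← sq q, ← hcardK]
    exact FiniteField.pow_card x
  -- star structure
  letI : StarRing K :=
    { star := fun x => x ^ q
      star_involutive := fun x => by
        show (x ^ q) ^ q = x
        rw [← pow_mul]; exact hpowcard x
      star_mul := fun x y => by
        show (x * y) ^ q = y ^ q * x ^ q
        rw [mul_pow, mul_comm]
      star_add := fun x y => by
        show (x + y) ^ q = x ^ q + y ^ q
        rw [← hpmq]
        exact add_pow_char_pow x y p m }
  have hstar : ∀ x : K, star x = x ^ q := fun _ => rfl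
  -- existence of elements of nonzero trace
  have hexist : ∃ s : K, s + s ^ q ≠ 0 := by
    by_contra h
    push_neg at h
    have hdeg : (Polynomial.X ^ q + Polynomial.X : Polynomial K).natDegree <
        Fintype.card K := by
      have h1 : (Polynomial.X ^ q + Polynomial.X : Polynomial K).natDegree ≤ q := by
        refine (Polynomial.natDegree_add_le _ _).trans ?_
        simp only [Polynomial.natDegree_X_pow, Polynomial.natDegree_X]
        omega
      have h2 : q < Fintype.card K := by rw [hcardK]; nlinarith
      omega
    have hzero : (Polynomial.X ^ q + Polynomial.X : Polynomial K) = 0 := by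
      refine Polynomial.eq_zero_of_natDegree_lt_card_of_eval_eq_zero _
        Function.injective_id (fun s => ?_) hdeg
      simp only [Polynomial.eval_add, Polynomial.eval_pow, Polynomial.eval_X, id]
      rw [add_comm]; exact h s
    have hco := congrArg (fun P => Polynomial.coeff P q) hzero
    simp only [Polynomial.coeff_add, Polynomial.coeff_X_pow, if_pos rfl,
      Polynomial.coeff_X, Polynomial.coeff_zero] at hco
    rw [if_neg (show ¬(1 : ℕ) = q by omega)] at hco
    simp at hco
  have htr : ∀ a : K, a ≠ 0 → ∃ t : K, t * star a + star t * a ≠ 0 := by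
    intro a ha
    obtain ⟨s, hs⟩ := hexist
    refine ⟨s * (a ^ q)⁻¹, ?_⟩
    have haq : (a : K) ^ q ≠ 0 := pow_ne_zero _ ha
    rw [hstar, hstar]
    have h1 : s * (a ^ q)⁻¹ * a ^ q = s := by
      rw [mul_assoc, inv_mul_cancel₀ haq, mul_one]
    have h2 : (s * (a ^ q)⁻¹) ^ q * a = s ^ q := by
      rw [mul_pow, inv_pow, ← pow_mul, hpowcard a, mul_assoc, inv_mul_cancel₀ ha,
        mul_one]
    rw [h1, h2]
    exact hs
  -- conversion between conjTranspose and the explicit σ-transpose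
  have hconv : ∀ M : Matrix (Fin d) (Fin d) K, Mᴴ = (M.map (· ^ q)).transpose := by
    intro M; ext i j; rfl
  have hAh : A.IsHermitian := by rw [Matrix.IsHermitian, hconv]; exact hA
  obtain ⟨S, hSu, hSdiag⟩ :=
    herm_diag_aux htr d (Fin d) (le_of_eq (Fintype.card_fin d)) A hAh
  exact ⟨S, hSu, by rw [← hconv]; exact hSdiag⟩
end

section
/- Let F be a field and A a d × d alternating matrix over F, i.e., A^T = −A and every diagonal entry of A is zero. Then there exists an invertible d × d matrix S over F such that S·A·S^T is block diagonal, with each diagonal block either the 1×1 zero block or a 2×2 block of the form [[0, a],[−a, 0]] for some a ∈ F. -/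
open Finset
set_option linter.unusedSectionVars false
set_option maxHeartbeats 1000000

/-- `B` is block diagonal, in the sense that there is an involutive pairing of the indices
such that each diagonal block is either a `1 × 1` zero block or a `2 × 2` block of the form
`[[0, a], [-a, 0]]`, and all entries outside these blocks vanish. -/
def IsAlternatingBlockDiagonal {F : Type*} [Field F] {d : ℕ}
    (B : Matrix (Fin d) (Fin d) F) : Prop :=
  ∃ σ : Equiv.Perm (Fin d),
    (∀ i, σ (σ i) = i) ∧
    (∀ i, B i i = 0) ∧
    (∀ i j, j ≠ i → j ≠ σ i → B i j = 0) ∧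
    (∀ i, B (σ i) i = - B i (σ i))

section Helpers

variable {F : Type*} [Field F] {ι : Type*} [Fintype ι] [DecidableEq ι]

lemma quad_zero (A : Matrix ι ι F) (hAlt : A.transpose = -A) (hdiag : ∀ i, A i i = 0)
    (v : ι → F) : ∑ p, ∑ q, v p * A p q * v q = 0 := by
  have hskew : ∀ p q, A q p = -A p q := by
    intro p q
    have := congrFun (congrFun hAlt p) q
    simpa [Matrix.transpose_apply] using this
  rw [← Finset.sum_product']
  refine Finset.sum_involution (fun a _ => (a.2, a.1)) ?_ ?_ (fun a ha => Finset.mem_univ _) ?_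
  · rintro ⟨p, q⟩ -
    simp only
    rw [hskew p q]
    ring
  · rintro ⟨p, q⟩ - hf
    simp only [ne_eq, Prod.mk.injEq, not_and]
    intro h1
    exfalso
    apply hf
    subst h1
    rw [hdiag]; ring
  · rintro ⟨p, q⟩ -; rfl

lemma cong_apply (S A : Matrix ι ι F) (k l : ι) :
    (S * A * S.transpose) k l = ∑ p, ∑ q, S k p * A p q * S l q := by
  simp only [Matrix.mul_apply, Matrix.transpose_apply, Finset.sum_mul]
  rw [Finset.sum_comm]

lemma cong_diag (S A : Matrix ι ι F) (hAlt : A.transpose = -A) (hdiag : ∀ i, A i i = 0)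
    (k : ι) : (S * A * S.transpose) k k = 0 := by
  rw [cong_apply]; exact quad_zero A hAlt hdiag (S k)

lemma cong_skew (S A : Matrix ι ι F) (hAlt : A.transpose = -A) (k l : ι) :
    (S * A * S.transpose) l k = -(S * A * S.transpose) k l := by
  have h : (S * A * S.transpose).transpose = -(S * A * S.transpose) := by
    rw [Matrix.transpose_mul, Matrix.transpose_mul, Matrix.transpose_transpose, hAlt]
    noncomm_ring
  have := congrFun (congrFun h k) l
  simpa [Matrix.transpose_apply] using this

lemma pair_sum (f : ι → F) (i j : ι) (hij : i ≠ j) (h : ∀ m, m ≠ i → m ≠ j → f m = 0) :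
    ∑ m, f m = f i + f j := by
  rw [← Finset.sum_pair hij]
  refine (Finset.sum_subset (Finset.subset_univ _) ?_).symm
  intro x _ hx
  simp only [Finset.mem_insert, Finset.mem_singleton, not_or] at hx
  exact h x hx.1 hx.2

lemma row_collapse (S X : Matrix ι ι F) (i l : ι)
    (h : ∀ p, S i p = if i = p then 1 else 0) :
    (S * X * S.transpose) i l = ∑ q, X i q * S l q := by
  rw [cong_apply]
  rw [Fintype.sum_eq_single i (fun p hp => ?_)]
  · refine Finset.sum_congr rfl fun q _ => ?_
    rw [h i, if_pos rfl, one_mul]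
  · refine Finset.sum_eq_zero fun q _ => ?_
    rw [h p, if_neg (Ne.symm hp), zero_mul, zero_mul]

lemma aux_block (s : Finset ι) :
    ∀ A : Matrix ι ι F, A.transpose = -A → (∀ i, A i i = 0) →
    (∀ k l, k ∉ s → l ∈ s → A k l = 0) →
    ∃ S : Matrix ι ι F, IsUnit S ∧
      (∀ k l, (k ∉ s ∨ l ∉ s) → S k l = if k = l then 1 else 0) ∧
      ∃ σ : Equiv.Perm ι, (∀ x, σ (σ x) = x) ∧ (∀ x, x ∉ s → σ x = x) ∧
        (∀ x ∈ s, ∀ l, l ≠ x → l ≠ σ x → (S * A * S.transpose) x l = 0) := by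
  induction s using Finset.strongInductionOn with
  | _ s ih =>
  intro A hAlt hdiag hcross
  have hAskew : ∀ p q, A q p = -A p q := by
    intro p q
    have := congrFun (congrFun hAlt p) q
    simpa [Matrix.transpose_apply] using this
  rcases Finset.eq_empty_or_nonempty s with hs | ⟨i, hi⟩
  · subst hs
    exact ⟨1, isUnit_one, fun k l _ => Matrix.one_apply, 1, fun x => rfl, fun x _ => rfl,
      fun x hx => absurd hx (Finset.notMem_empty x)⟩
  by_cases hrow : ∀ j ∈ s, A i j = 0
  · -- row i vanishes on s, hence vanishes entirely
    have hrowall : ∀ q, A i q = 0 := by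
      intro q
      by_cases hq : q ∈ s
      · exact hrow q hq
      · rw [hAskew q i, hcross q i hq hi, neg_zero]
    have hi' : i ∉ s.erase i := by simp
    have hcross' : ∀ k l, k ∉ s.erase i → l ∈ s.erase i → A k l = 0 := by
      intro k l hk hl
      rw [Finset.mem_erase] at hk hl
      by_cases hki : k = i
      · subst hki; exact hrowall l
      · push_neg at hk
        exact hcross k l (hk hki) hl.2
    obtain ⟨S, hS, hSid, σ, hσinv, hσfix, hc1⟩ :=
      ih (s.erase i) (Finset.erase_ssubset hi) A hAlt hdiag hcross'
    have hBil : ∀ l, (S * A * S.transpose) i l = 0 := by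
      intro l
      rw [row_collapse S A i l (fun p => hSid i p (Or.inl hi'))]
      exact Finset.sum_eq_zero fun q _ => by rw [hrowall q, zero_mul]
    refine ⟨S, hS, fun k l h => hSid k l ?_, σ, hσinv,
        fun x hx => hσfix x (fun hx' => hx (Finset.mem_of_mem_erase hx')), ?_⟩
    · rcases h with h | h
      · exact Or.inl fun h' => h (Finset.mem_of_mem_erase h')
      · exact Or.inr fun h' => h (Finset.mem_of_mem_erase h')
    · intro x hx l hl hlσ
      by_cases hxi : x = i
      · subst hxi; exact hBil l
      · exact hc1 x (Finset.mem_erase.2 ⟨hxi, hx⟩) l hl hlσ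
  · -- there is j ∈ s with A i j ≠ 0
    push_neg at hrow
    obtain ⟨j, hj, haj⟩ := hrow
    set a := A i j with ha
    have ha0 : a ≠ 0 := haj
    have hji : j ≠ i := by
      intro h; subst h; exact haj (hdiag j)
    have hij : i ≠ j := Ne.symm hji
    set N : Matrix ι ι F := Matrix.of fun k l =>
      if k = i ∨ k = j then 0
      else if l = i then A j k / a else if l = j then -(A i k / a) else 0 with hN
    have hNi : ∀ p, N i p = 0 := fun p => by simp [hN]
    have hNj : ∀ p, N j p = 0 := fun p => by simp [hN]
    have hNcol : ∀ k l, l ≠ i → l ≠ j → N k l = 0 := by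
      intro k l h1 h2
      simp [hN, h1, h2]
    have hNki : ∀ k, ¬(k = i ∨ k = j) → N k i = A j k / a := by
      intro k hk; simp [hN, hk]
    have hNkj : ∀ k, ¬(k = i ∨ k = j) → N k j = -(A i k / a) := by
      intro k hk; simp [hN, hk, hji]
    have hNout : ∀ k, k ∉ s → ∀ p, N k p = 0 := by
      intro k hk p
      by_cases hkij : k = i ∨ k = j
      · rcases hkij with h | h
        · subst h; exact absurd hi hk
        · subst h; exact absurd hj hk
      · by_cases hpi : p = i
        · subst hpi
          rw [hNki k hkij, hAskew k j, hcross k j hk hj, neg_zero, zero_div]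
        · by_cases hpj : p = j
          · subst hpj
            rw [hNkj k hkij, hAskew k i, hcross k i hk hi, neg_zero, zero_div, neg_zero]
          · exact hNcol k p hpi hpj
    have hNN : N * N = 0 := by
      ext k l
      rw [Matrix.mul_apply, Matrix.zero_apply]
      refine Finset.sum_eq_zero fun m _ => ?_
      by_cases hm : m = i ∨ m = j
      · rcases hm with h | h <;> subst h <;> simp [hNi, hNj]
      · push_neg at hm; rw [hNcol k m hm.1 hm.2, zero_mul]
    set T : Matrix ι ι F := 1 + N with hT
    have hTapp : ∀ k l, T k l = (if k = l then 1 else 0) + N k l := by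
      intro k l; simp [hT, Matrix.add_apply, Matrix.one_apply]
    have hTunit : IsUnit T := by
      have h1 : (1 + N) * (1 - N) = 1 - N * N := by noncomm_ring
      have h2 : (1 - N) * (1 + N) = 1 - N * N := by noncomm_ring
      exact ⟨⟨T, 1 - N, by rw [hT, h1, hNN, sub_zero], by rw [hT, h2, hNN, sub_zero]⟩, rfl⟩
    set A₂ := T * A * T.transpose with hA2def
    have hA2alt : A₂.transpose = -A₂ := by
      ext k l
      rw [Matrix.transpose_apply, Matrix.neg_apply]
      exact cong_skew T A hAlt k l
    have hA2diag : ∀ k, A₂ k k = 0 := fun k => cong_diag T A hAlt hdiag k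
    have hNX : ∀ (X : Matrix ι ι F) (k l : ι), (N * X) k l = N k i * X i l + N k j * X j l := by
      intro X k l
      rw [Matrix.mul_apply]
      refine pair_sum _ i j hij fun m h1 h2 => ?_
      rw [hNcol k m h1 h2, zero_mul]
    have hANt : ∀ k l, (A * N.transpose) k l = A k i * N l i + A k j * N l j := by
      intro k l
      rw [Matrix.mul_apply]
      simp only [Matrix.transpose_apply]
      refine pair_sum _ i j hij fun m h1 h2 => ?_
      rw [hNcol l m h1 h2, mul_zero]
    have hA2eq : A₂ = A + N * A + A * N.transpose + N * (A * N.transpose) := by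
      rw [hA2def, hT, Matrix.transpose_add, Matrix.transpose_one]
      noncomm_ring
    have hA2app : ∀ k l, A₂ k l = A k l + (N k i * A i l + N k j * A j l)
        + (A k i * N l i + A k j * N l j)
        + (N k i * (a * N l j) + N k j * (-a * N l i)) := by
      intro k l
      rw [hA2eq]
      simp only [Matrix.add_apply]
      rw [hNX A k l, hANt k l, hNX (A * N.transpose) k l, hANt i l, hANt j l,
        hdiag i, hdiag j, hAskew i j, ← ha]
      ring
    have hA2il : ∀ l, l ≠ i → l ≠ j → A₂ i l = 0 := by
      intro l h1 h2
      have hl : ¬(l = i ∨ l = j) := by tauto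
      rw [hA2app i l, hNi i, hNi j, hdiag i, hNkj l hl, ← ha]
      field_simp
      ring
    have hA2jl : ∀ l, l ≠ i → l ≠ j → A₂ j l = 0 := by
      intro l h1 h2
      have hl : ¬(l = i ∨ l = j) := by tauto
      rw [hA2app j l, hNj i, hNj j, hdiag j, hNki l hl, hAskew i j, ← ha]
      field_simp
      ring
    have hiS : i ∉ (s.erase i).erase j := by simp
    have hjS : j ∉ (s.erase i).erase j := by simp
    have hsub : (s.erase i).erase j ⊂ s :=
      lt_of_le_of_lt (Finset.erase_subset _ _) (Finset.erase_ssubset hi)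
    have hcross2 : ∀ k l, k ∉ (s.erase i).erase j → l ∈ (s.erase i).erase j → A₂ k l = 0 := by
      intro k l hk hl
      rw [Finset.mem_erase, Finset.mem_erase] at hl
      by_cases hki : k = i
      · subst hki; exact hA2il l hl.2.1 hl.1
      by_cases hkj : k = j
      · subst hkj; exact hA2jl l hl.2.1 hl.1
      have hks : k ∉ s := by
        by_contra hks
        exact hk (Finset.mem_erase.2 ⟨hkj, Finset.mem_erase.2 ⟨hki, hks⟩⟩)
      rw [hA2app k l, hNout k hks i, hNout k hks j, hcross k l hks hl.2.2,
        hcross k i hks hi, hcross k j hks hj]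
      ring
    obtain ⟨S₁, hS₁, hS₁id, σ₁, hσ₁inv, hσ₁fix, hc1⟩ :=
      ih ((s.erase i).erase j) hsub A₂ hA2alt hA2diag hcross2
    have hσ₁mem : ∀ k, k ∈ (s.erase i).erase j → σ₁ k ∈ (s.erase i).erase j := by
      intro k hk
      by_contra h
      have h1 : σ₁ (σ₁ k) = σ₁ k := hσ₁fix _ h
      rw [hσ₁inv k] at h1
      rw [← h1] at h
      exact h hk
    have hS₁row : ∀ p, S₁ i p = if i = p then 1 else 0 := fun p => hS₁id i p (Or.inl hiS)
    have hS₁rowj : ∀ p, S₁ j p = if j = p then 1 else 0 := fun p => hS₁id j p (Or.inl hjS)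
    have hBil : ∀ l, l ≠ j → (S₁ * A₂ * S₁.transpose) i l = 0 := by
      intro l hl
      rw [row_collapse S₁ A₂ i l hS₁row]
      rw [pair_sum _ i j hij (fun m h1 h2 => by rw [hA2il m h1 h2, zero_mul])]
      rw [hA2diag i, zero_mul, zero_add, hS₁id l j (Or.inr hjS), if_neg hl, mul_zero]
    have hBjl : ∀ l, l ≠ i → (S₁ * A₂ * S₁.transpose) j l = 0 := by
      intro l hl
      rw [row_collapse S₁ A₂ j l hS₁rowj]
      rw [pair_sum _ i j hij (fun m h1 h2 => by rw [hA2jl m h1 h2, zero_mul])]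
      rw [hA2diag j, zero_mul, add_zero, hS₁id l i (Or.inr hiS), if_neg hl, mul_zero]
    have hBeq : (S₁ * T) * A * (S₁ * T).transpose = S₁ * A₂ * S₁.transpose := by
      rw [hA2def, Matrix.transpose_mul]
      noncomm_ring
    have hσapp : ∀ x, (σ₁ * Equiv.swap i j) x = σ₁ (Equiv.swap i j x) := fun x => rfl
    have hσi : (σ₁ * Equiv.swap i j) i = j := by
      rw [hσapp, Equiv.swap_apply_left]; exact hσ₁fix j hjS
    have hσj : (σ₁ * Equiv.swap i j) j = i := by
      rw [hσapp, Equiv.swap_apply_right]; exact hσ₁fix i hiS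
    have hσk : ∀ x, x ≠ i → x ≠ j → (σ₁ * Equiv.swap i j) x = σ₁ x := fun x h1 h2 => by
      rw [hσapp, Equiv.swap_apply_of_ne_of_ne h1 h2]
    refine ⟨S₁ * T, hS₁.mul hTunit, ?_, σ₁ * Equiv.swap i j, ?_, ?_, ?_⟩
    · -- identity outside s
      intro k l hkl
      rw [Matrix.mul_apply]
      rcases hkl with hk | hl
      · have hk' : k ∉ (s.erase i).erase j := fun h =>
          hk (Finset.mem_of_mem_erase (Finset.mem_of_mem_erase h))
        rw [Fintype.sum_eq_single k (fun m hm => by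
          rw [hS₁id k m (Or.inl hk'), if_neg (fun h => hm h.symm), zero_mul])]
        rw [hS₁id k k (Or.inl hk'), if_pos rfl, one_mul, hTapp, hNout k hk l, add_zero]
      · have hl' : l ∉ (s.erase i).erase j := fun h =>
          hl (Finset.mem_of_mem_erase (Finset.mem_of_mem_erase h))
        have hTcol : ∀ m, T m l = if m = l then 1 else 0 := by
          intro m
          rw [hTapp, hNcol m l (fun h => hl (h ▸ hi)) (fun h => hl (h ▸ hj)), add_zero]
        rw [Fintype.sum_eq_single l (fun m hm => by rw [hTcol m, if_neg hm, mul_zero])]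
        rw [hTcol l, if_pos rfl, mul_one, hS₁id k l (Or.inr hl')]
    · -- involution
      intro x
      by_cases hx1 : x = i
      · subst hx1; rw [hσi, hσj]
      by_cases hx2 : x = j
      · subst hx2; rw [hσj, hσi]
      rw [hσk x hx1 hx2]
      by_cases hxs : x ∈ (s.erase i).erase j
      · have hm := hσ₁mem x hxs
        have h1 : σ₁ x ≠ i := fun h => hiS (h ▸ hm)
        have h2 : σ₁ x ≠ j := fun h => hjS (h ▸ hm)
        rw [hσk _ h1 h2, hσ₁inv]
      · rw [hσ₁fix x hxs, hσk x hx1 hx2, hσ₁fix x hxs]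
    · -- fixes outside s
      intro x hx
      have h1 : x ≠ i := fun h => hx (h ▸ hi)
      have h2 : x ≠ j := fun h => hx (h ▸ hj)
      have hxs : x ∉ (s.erase i).erase j := fun h =>
        hx (Finset.mem_of_mem_erase (Finset.mem_of_mem_erase h))
      rw [hσk x h1 h2, hσ₁fix x hxs]
    · -- block condition
      intro x hx l hl hlσ
      rw [hBeq]
      by_cases hx1 : x = i
      · subst hx1
        rw [hσi] at hlσ
        exact hBil l hlσ
      by_cases hx2 : x = j
      · subst hx2
        rw [hσj] at hlσ
        exact hBjl l hlσ
      have hxs : x ∈ (s.erase i).erase j :=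
        Finset.mem_erase.2 ⟨hx2, Finset.mem_erase.2 ⟨hx1, hx⟩⟩
      rw [hσk x hx1 hx2] at hlσ
      exact hc1 x hxs l hl hlσ

end Helpers

/-- Every alternating matrix over a field is congruent to a block diagonal matrix whose
blocks are `1 × 1` zero blocks or `2 × 2` blocks `[[0, a], [-a, 0]]`. -/
theorem alternating_matrix_block_diagonalizable (F : Type*) [Field F] (d : ℕ)
    (A : Matrix (Fin d) (Fin d) F) (hAlt : A.transpose = -A) (hdiag : ∀ i, A i i = 0) :
    ∃ S : Matrix (Fin d) (Fin d) F, IsUnit S ∧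
      IsAlternatingBlockDiagonal (S * A * S.transpose) := by
  obtain ⟨S, hS, -, σ, hinv, -, hc1⟩ :=
    aux_block (Finset.univ : Finset (Fin d)) A hAlt hdiag
      (fun k l hk _ => absurd (Finset.mem_univ k) hk)
  exact ⟨S, hS, σ, hinv, fun i => cong_diag S A hAlt hdiag i,
    fun i j hji hjσ => hc1 i (Finset.mem_univ i) j hji hjσ,
    fun i => cong_skew S A hAlt i (σ i)⟩
end

section
/- Let q be a prime power, K the finite field with q^2 elements, and σ its automorphism x ↦ x^q. Let A be an invertible d × d Hermitian matrix over K (A^{σT} = A). Then there exists an invertible d × d matrix S over K such that S·A·S^{σT} = I_d. In particular, any two invertible Hermitian d × d matrices over K are congruent via the σ-conjugate-transpose congruence. -/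
namespace HermitianCongruenceAux

open Matrix Finset

variable {K : Type*} [Field K] (σ : K →+* K)

lemma adj_mul {ι : Type*} [Fintype ι] (M N : Matrix ι ι K) :
    ((M * N).map σ).transpose = (N.map σ).transpose * (M.map σ).transpose := by
  rw [Matrix.map_mul, Matrix.transpose_mul]

lemma adj_one {ι : Type*} [Fintype ι] [DecidableEq ι] :
    ((1 : Matrix ι ι K).map σ).transpose = 1 := by
  rw [Matrix.map_one σ (map_zero σ) (map_one σ), Matrix.transpose_one]

lemma adj_isUnit {ι : Type*} [Fintype ι] [DecidableEq ι] {M : Matrix ι ι K}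
    (h : IsUnit M) : IsUnit ((M.map σ).transpose) := by
  obtain ⟨U, rfl⟩ := h
  apply IsUnit.of_mul_eq_one
    (b := ((((U⁻¹ : (Matrix ι ι K)ˣ) : Matrix ι ι K)).map σ).transpose)
  rw [← adj_mul, Units.inv_mul, adj_one]


def Psi {ι : Type*} [Fintype ι] (A : Matrix ι ι K) (v w : ι → K) : K :=
  ∑ k, ∑ l, v k * (A k l * σ (w l))

lemma Psi_single_single {ι : Type*} [Fintype ι] [DecidableEq ι] (A : Matrix ι ι K) (i j : ι) :
    Psi σ A (Pi.single i 1) (Pi.single j 1) = A i j := by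
  rw [Psi]
  simp [Pi.single_apply, apply_ite σ, Finset.sum_ite_eq]

lemma Psi_add_left {ι : Type*} [Fintype ι] (A : Matrix ι ι K) (v w u : ι → K) :
    Psi σ A (v + w) u = Psi σ A v u + Psi σ A w u := by
  simp [Psi, add_mul, Finset.sum_add_distrib]

lemma Psi_add_right {ι : Type*} [Fintype ι] (A : Matrix ι ι K) (v w u : ι → K) :
    Psi σ A u (v + w) = Psi σ A u v + Psi σ A u w := by
  simp only [Psi, Pi.add_apply, map_add, mul_add, add_mul, Finset.sum_add_distrib]

lemma Psi_smul_left {ι : Type*} [Fintype ι] (A : Matrix ι ι K) (t : K) (v u : ι → K) :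
    Psi σ A (t • v) u = t * Psi σ A v u := by
  simp only [Psi, Pi.smul_apply, smul_eq_mul, Finset.mul_sum, mul_assoc]

lemma Psi_smul_right {ι : Type*} [Fintype ι] (A : Matrix ι ι K) (t : K) (v u : ι → K) :
    Psi σ A u (t • v) = σ t * Psi σ A u v := by
  simp only [Psi, Pi.smul_apply, smul_eq_mul, _root_.map_mul, Finset.mul_sum]
  exact Finset.sum_congr rfl fun k _ => Finset.sum_congr rfl fun l _ => by ring

lemma exists_aniso {ι : Type*} [Fintype ι] [DecidableEq ι] [Nonempty ι]
    (A : Matrix ι ι K) (hne : ∃ μ : K, σ μ ≠ μ)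
    (herm : ∀ i j, σ (A j i) = A i j) (hA : IsUnit A) :
    ∃ v : ι → K, Psi σ A v v ≠ 0 := by
  by_contra h0
  push_neg at h0
  have diag : ∀ i, A i i = 0 := fun i => by
    have := h0 (Pi.single i 1); rwa [Psi_single_single] at this
  have hzero : ∀ i j, A i j = 0 := by
    intro i j
    rcases eq_or_ne i j with rfl | hij
    · exact diag i
    · obtain ⟨μ, hμ⟩ := hne
      have key : ∀ lam : K, σ lam * A i j + lam * σ (A i j) = 0 := by
        intro lam
        have h := h0 ((Pi.single i 1 : ι → K) + lam • (Pi.single j 1 : ι → K))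
        simp only [Psi_add_left, Psi_add_right, Psi_smul_left, Psi_smul_right,
            Psi_single_single] at h
        rw [diag i, diag j] at h
        have hji : A j i = σ (A i j) := (herm j i).symm
        rw [hji] at h
        linear_combination h
      have h1 := key 1
      rw [_root_.map_one, one_mul, one_mul] at h1
      have hσa : σ (A i j) = -A i j := by linear_combination h1
      have h2 := key μ
      rw [hσa] at h2
      have h3 : (σ μ - μ) * A i j = 0 := by linear_combination h2
      rcases mul_eq_zero.mp h3 with h4 | h4
      · exact absurd (sub_eq_zero.mp h4) hμ
      · exact h4
  have hAzero : A = 0 := by ext i j; exact hzero i j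
  obtain ⟨U, hU⟩ := hA
  have hU1 : A * (↑U⁻¹ : Matrix ι ι K) = 1 := by rw [← hU]; exact U.mul_inv
  rw [hAzero, zero_mul] at hU1
  obtain ⟨i⟩ := ‹Nonempty ι›
  have := Matrix.ext_iff.mpr hU1 i i
  simp at this

lemma Psi_eq {ι : Type*} [Fintype ι] (A : Matrix ι ι K) (v w : ι → K) :
    Psi σ A v w = ∑ k, v k * ∑ l, A k l * σ (w l) := by
  rw [Psi]; simp [Finset.mul_sum]

lemma Psi_conj {ι : Type*} [Fintype ι] (A : Matrix ι ι K) (hσσ : ∀ x, σ (σ x) = x)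
    (herm : ∀ i j, σ (A j i) = A i j) (v w : ι → K) :
    σ (Psi σ A v w) = Psi σ A w v := by
  rw [Psi, Psi, map_sum]
  simp only [map_sum, _root_.map_mul, hσσ]
  rw [Finset.sum_comm]
  exact Finset.sum_congr rfl fun l _ => Finset.sum_congr rfl fun k _ => by
    rw [herm l k]; ring

lemma tri_apply {ι : Type*} [Fintype ι] (M A : Matrix ι ι K) (i j : ι) :
    (M * A * (M.map σ).transpose) i j = Psi σ A (M i) (M j) := by
  rw [Psi, Matrix.mul_apply]
  simp only [Matrix.transpose_apply, Matrix.map_apply, Matrix.mul_apply, Finset.sum_mul]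
  rw [Finset.sum_comm]
  exact Finset.sum_congr rfl fun k _ => Finset.sum_congr rfl fun l _ => by ring

lemma exists_congr_one (hσσ : ∀ x : K, σ (σ x) = x)
    (hne : ∃ μ : K, σ μ ≠ μ)
    (hnorm : ∀ c : K, c ≠ 0 → σ c = c → ∃ l : K, l * σ l = c) :
    ∀ (d : ℕ) (A : Matrix (Fin d) (Fin d) K), IsUnit A → (A.map σ).transpose = A →
    ∃ S : Matrix (Fin d) (Fin d) K, S * A * (S.map σ).transpose = 1 := by
  intro d
  induction d with
  | zero => exact fun A _ _ => ⟨1, Subsingleton.elim _ _⟩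
  | succ n IH =>
    intro A hA hherm
    have herm : ∀ i j, σ (A j i) = A i j := by
      intro i j
      have := Matrix.ext_iff.mpr hherm i j
      simpa using this
    obtain ⟨v, hv⟩ := exists_aniso σ A hne herm hA
    set c := Psi σ A v v with hc
    have hcσ : σ c = c := Psi_conj σ A hσσ herm v v
    obtain ⟨l, hl⟩ := hnorm c hv hcσ
    have hl0 : l ≠ 0 := by rintro rfl; rw [zero_mul] at hl; exact hv hl.symm
    have hσl : σ l ≠ 0 := fun h => hv (by rw [← hl, h, mul_zero])
    set w : Fin (n+1) → K := l⁻¹ • v with hw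
    have hww : Psi σ A w w = 1 := by
      rw [hw, Psi_smul_left, Psi_smul_right, map_inv₀, ← hc, ← hl]
      field_simp
    have hw0 : w ≠ 0 := by
      intro h
      have h2 : Psi σ A (0 : Fin (n+1) → K) 0 = 0 := by simp [Psi]
      rw [h, h2] at hww
      exact zero_ne_one hww
    obtain ⟨k, hk⟩ := Function.ne_iff.mp hw0
    have hk : w k ≠ 0 := hk
    set s := Equiv.swap (0 : Fin (n+1)) k with hs
    set T : Matrix (Fin (n+1)) (Fin (n+1)) K :=
      Matrix.of fun i j => if i = 0 then w j else if j = s i then 1 else 0 with hT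
    have hT0 : ∀ j, T 0 j = w j := fun j => by simp [hT]
    have hTrow : ∀ i, i ≠ 0 → ∀ j, T i j = if j = s i then 1 else 0 := fun i hi j => by
      simp [hT, hi]
    have hTunit : IsUnit T := by
      rw [Matrix.isUnit_iff_isUnit_det, isUnit_iff_ne_zero]
      intro hdet
      obtain ⟨y, hy0, hy⟩ := Matrix.exists_mulVec_eq_zero_iff.mpr hdet
      have hyj : ∀ j, j ≠ k → y j = 0 := by
        intro j hj
        have hsne : s j ≠ 0 := by
          intro h
          apply hj
          have h2 : s (s j) = s 0 := by rw [h]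
          rwa [Equiv.swap_apply_self, hs, Equiv.swap_apply_left] at h2
        have hrow : (T.mulVec y) (s j) = y j := by
          simp [Matrix.mulVec, dotProduct, hTrow _ hsne, hs, Equiv.swap_apply_self,
            ite_mul, one_mul, zero_mul, Finset.sum_ite_eq']
          rw [← hs]; simp only [hTrow _ hsne]
          simp [hs, Equiv.swap_apply_self]
        rw [hy] at hrow
        exact hrow.symm
      have hyk : y k = 0 := by
        have h0 : ∑ j, w j * y j = 0 := by
          have := congrFun hy 0
          simpa [Matrix.mulVec, dotProduct, hT0] using this
        rw [Finset.sum_eq_single k (fun b _ hb => by rw [hyj b hb, mul_zero]) (by simp)] at h0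
        exact (mul_eq_zero.mp h0).resolve_left hk
      apply hy0
      funext j
      rcases eq_or_ne j k with rfl | h
      · exact hyk
      · exact hyj j h
    set B := T * A * (T.map σ).transpose with hB
    have hBunit : IsUnit B := (hTunit.mul hA).mul (adj_isUnit σ hTunit)
    have hBherm : ∀ i j, σ (B j i) = B i j := by
      intro i j
      rw [hB, tri_apply, tri_apply, Psi_conj σ A hσσ herm]
    have hB00 : B 0 0 = 1 := by
      rw [hB, tri_apply, show T 0 = w from funext hT0, hww]
    set u : Fin (n+1) → K := fun i => if i = 0 then 0 else B i 0 with hu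
    have hu0 : u 0 = 0 := by simp [hu]
    set N : Matrix (Fin (n+1)) (Fin (n+1)) K := Matrix.of fun i j => if j = 0 then u i else 0
      with hN
    set E : Matrix (Fin (n+1)) (Fin (n+1)) K := 1 - N with hE
    have hNN : N * N = 0 := by
      ext i j
      simp [hN, Matrix.mul_apply, ite_mul, zero_mul, mul_ite, mul_zero, Finset.sum_ite_eq',
        hu0]
    have hEunit : IsUnit E := by
      apply IsUnit.of_mul_eq_one (b := 1 + N)
      rw [hE, sub_mul, one_mul, mul_add, mul_one, hNN, add_zero]
      exact add_sub_cancel_right 1 N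
    set C := E * B * (E.map σ).transpose with hC
    have hCunit : IsUnit C := (hEunit.mul hBunit).mul (adj_isUnit σ hEunit)
    have hCherm : ∀ i j, σ (C j i) = C i j := fun i j => by
      rw [hC, tri_apply, tri_apply, Psi_conj σ B hσσ hBherm]
    have hEentry : ∀ i jj, E i jj = (if i = jj then (1:K) else 0) - (if jj = 0 then u i else 0) := by
      intro i jj; simp [hE, hN, Matrix.one_apply, Matrix.sub_apply]
    have hCrow : ∀ j, C 0 j = B 0 j - σ (u j) := by
      intro j
      rw [hC, tri_apply, Psi_eq]
      have hE0 : ∀ m, E 0 m = if (0:Fin (n+1)) = m then (1:K) else 0 := by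
        intro m; rw [hEentry]; simp [hu0]
      simp only [hE0, ite_mul, one_mul, zero_mul, Finset.sum_ite_eq, Finset.mem_univ, if_true]
      simp only [hEentry, map_sub, apply_ite σ, _root_.map_one, map_zero, mul_sub,
        mul_ite, mul_one, mul_zero, Finset.sum_sub_distrib, Finset.sum_ite_eq,
        Finset.sum_ite_eq', Finset.mem_univ, if_true, hB00, one_mul]
    have hC00 : C 0 0 = 1 := by rw [hCrow]; simp [hu0, hB00]
    have hC0j : ∀ j, j ≠ 0 → C 0 j = 0 := by
      intro j hj
      rw [hCrow]
      have huj : u j = B j 0 := by rw [hu]; simp [hj]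
      rw [huj, hBherm 0 j, sub_self]
    have hCj0 : ∀ i, i ≠ 0 → C i 0 = 0 := fun i hi => by
      rw [← hCherm i 0, hC0j i hi, map_zero]
    set A' : Matrix (Fin n) (Fin n) K := Matrix.of fun i j => C i.succ j.succ with hA'
    have hA'herm : (A'.map σ).transpose = A' := by
      ext i j
      simp only [Matrix.transpose_apply, Matrix.map_apply, hA', Matrix.of_apply]
      exact hCherm _ _
    have hA'unit : IsUnit A' := by
      rw [Matrix.isUnit_iff_isUnit_det, isUnit_iff_ne_zero]
      intro hdet
      obtain ⟨x, hx0, hx⟩ := Matrix.exists_mulVec_eq_zero_iff.mpr hdet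
      have hCdet : C.det ≠ 0 := isUnit_iff_ne_zero.mp ((Matrix.isUnit_iff_isUnit_det C).mp hCunit)
      apply hCdet
      rw [← Matrix.exists_mulVec_eq_zero_iff]
      refine ⟨Fin.cons 0 x, ?_, ?_⟩
      · intro h
        apply hx0
        funext j
        have := congrFun h j.succ
        simpa [Fin.cons_succ] using this
      · funext i
        rcases i.eq_zero_or_eq_succ with rfl | ⟨i', rfl⟩
        · simp only [Matrix.mulVec, dotProduct, Pi.zero_apply, Fin.sum_univ_succ,
            Fin.cons_zero, Fin.cons_succ, mul_zero, zero_add]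
          exact Finset.sum_eq_zero fun j' _ => by
            rw [hC0j _ (Fin.succ_ne_zero j'), zero_mul]
        · have h2 := congrFun hx i'
          simp only [Matrix.mulVec, dotProduct, hA', Matrix.of_apply,
            Pi.zero_apply] at h2
          simp only [Matrix.mulVec, dotProduct, Pi.zero_apply, Fin.sum_univ_succ,
            Fin.cons_zero, Fin.cons_succ, mul_zero, zero_add]
          exact h2
    obtain ⟨S', hS'⟩ := IH A' hA'unit hA'herm
    set S₂ : Matrix (Fin (n+1)) (Fin (n+1)) K :=
      Matrix.of (Fin.cons (Fin.cons 1 0) fun i' => Fin.cons 0 (S' i')) with hS₂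
    have e00 : S₂ 0 0 = 1 := by simp [hS₂]
    have e0s : ∀ m : Fin n, S₂ 0 m.succ = 0 := fun m => by simp [hS₂]
    have es0 : ∀ m : Fin n, S₂ m.succ 0 = 0 := fun m => by simp [hS₂]
    have ess : ∀ m m' : Fin n, S₂ m.succ m'.succ = S' m m' := fun m m' => by simp [hS₂]
    have hC0succ : ∀ l' : Fin n, C 0 l'.succ = 0 := fun l' => hC0j _ (Fin.succ_ne_zero l')
    have hCsucc0 : ∀ l' : Fin n, C l'.succ 0 = 0 := fun l' => hCj0 _ (Fin.succ_ne_zero l')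
    have hS₂C : S₂ * C * (S₂.map σ).transpose = 1 := by
      ext i j
      rw [tri_apply, Psi_eq]
      rcases i.eq_zero_or_eq_succ with rfl | ⟨i', rfl⟩ <;>
        rcases j.eq_zero_or_eq_succ with rfl | ⟨j', rfl⟩
      · simp [Fin.sum_univ_succ, e00, e0s, hC00, hC0succ, Matrix.one_apply]
      · simp [Fin.sum_univ_succ, e00, e0s, es0, hC00, hC0succ, Matrix.one_apply,
          (Fin.succ_ne_zero j').symm]
      · simp [Fin.sum_univ_succ, e00, e0s, es0, ess, hC00, hC0succ, hCsucc0,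
          Matrix.one_apply, Fin.succ_ne_zero i']
      · have h4 := Matrix.ext_iff.mpr hS' i' j'
        rw [tri_apply, Psi_eq] at h4
        simp only [hA', Matrix.of_apply] at h4
        simp only [Fin.sum_univ_succ, e00, e0s, es0, ess, map_zero, mul_zero, zero_mul,
          zero_add, add_zero, hC00, hC0succ, hCsucc0, Finset.sum_const_zero]
        rw [h4]
        simp [Matrix.one_apply, Fin.succ_inj]
    refine ⟨S₂ * E * T, ?_⟩
    have hassoc : (S₂ * E * T) * A * (((S₂ * E * T).map σ).transpose)
        = S₂ * (E * (T * A * (T.map σ).transpose) * (E.map σ).transpose) * (S₂.map σ).transpose := by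
      rw [adj_mul, adj_mul]
      simp only [Matrix.mul_assoc]
    rw [hassoc, ← hB, ← hC, hS₂C]


lemma exists_nonfixed {K : Type*} [Field K] [Fintype K] {q : ℕ} (hq2 : 2 ≤ q)
    (hcard : Fintype.card K = q^2) : ∃ μ : K, μ ^ q ≠ μ := by
  classical
  by_contra h
  push_neg at h
  obtain ⟨g, hg⟩ := IsCyclic.exists_generator (α := Kˣ)
  have horder : orderOf g = q^2 - 1 := by
    rw [orderOf_eq_card_of_forall_mem_zpowers hg, Nat.card_eq_fintype_card, Fintype.card_units, hcard]
  have hgq : g ^ q = g := Units.ext (by simpa using h g)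
  have hone : g ^ (q - 1) = 1 := by
    apply mul_right_cancel (b := g)
    rw [← pow_succ, show (q-1)+1 = q from by omega, hgq, one_mul]
  have hdvd : orderOf g ∣ q - 1 := orderOf_dvd_of_pow_eq_one hone
  rw [horder] at hdvd
  have hle := Nat.le_of_dvd (by omega) hdvd
  have h2q : 2*q ≤ q*q := Nat.mul_le_mul_right q (by omega)
  have hsq : q^2 = q*q := sq q
  omega

lemma norm_exists {K : Type*} [Field K] [Fintype K] {q : ℕ} (hq2 : 2 ≤ q)
    (hcard : Fintype.card K = q^2) (c : K) (hc0 : c ≠ 0) (hcq : c ^ q = c) :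
    ∃ l : K, l ≠ 0 ∧ l ^ (q+1) = c := by
  classical
  obtain ⟨g, hg⟩ := IsCyclic.exists_generator (α := Kˣ)
  have horder : orderOf g = q^2 - 1 := by
    rw [orderOf_eq_card_of_forall_mem_zpowers hg, Nat.card_eq_fintype_card, Fintype.card_units, hcard]
  obtain ⟨m, hm⟩ := (Submonoid.mem_powers_iff _ _).mp
    ((mem_powers_iff_mem_zpowers).mpr (hg (Units.mk0 c hc0)))
  have hmq : g ^ (m * q) = g ^ m := by
    rw [pow_mul, hm]
    exact Units.ext (by simpa using hcq)
  have hmod : m * q ≡ m [MOD q^2 - 1] := by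
    rw [← horder]; exact pow_eq_pow_iff_modEq.mp hmq
  have hdvd : (q^2 - 1) ∣ m * q - m :=
    (Nat.modEq_iff_dvd' (Nat.le_mul_of_pos_right m (by omega))).mp hmod.symm
  have hfact : m * q - m = m * (q - 1) := by
    rw [Nat.mul_sub, mul_one]
  have hq2' : q^2 - 1 = (q+1) * (q-1) := by
    obtain ⟨r, rfl⟩ : ∃ r, q = r + 2 := ⟨q - 2, by omega⟩
    have h1 : (r+2)^2 = r*r + 4*r + 4 := by ring
    have h2 : (r+2+1)*(r+2-1) = r*r + 4*r + 3 := by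
      rw [show r+2-1 = r+1 from by omega]; ring
    omega
  rw [hfact, hq2'] at hdvd
  have hdvd2 : (q+1) ∣ m := by
    have hq1 : (q - 1 : ℕ) ≠ 0 := by omega
    exact (mul_dvd_mul_iff_right hq1).mp hdvd
  obtain ⟨t, ht⟩ := hdvd2
  refine ⟨((g ^ t : Kˣ) : K), Units.ne_zero _, ?_⟩
  have hpow : (g ^ t) ^ (q+1) = Units.mk0 c hc0 := by
    rw [← pow_mul, mul_comm t (q+1), ← ht, hm]
  calc ((g^t : Kˣ):K)^(q+1) = (((g^t)^(q+1) : Kˣ) : K) := by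
        norm_cast
    _ = c := by rw [hpow]; rfl


lemma unit_of_tri {K : Type*} [Field K] (σ : K →+* K) {m : ℕ}
    (S X : Matrix (Fin m) (Fin m) K) (h : S * X * (S.map σ).transpose = 1) : IsUnit S :=
  IsUnit.of_mul_eq_one (b := X * (S.map σ).transpose)
    (by rw [← mul_assoc]; exact h)

end HermitianCongruenceAux

open HermitianCongruenceAux in
/-- Every invertible Hermitian matrix over `𝔽_{q²}` is congruent (via `S * A * S^{σT}`) to the
identity; in particular any two invertible Hermitian matrices of the same size are congruent. -/
theorem invertible_hermitian_congruent_to_identity (q : ℕ) (hq : IsPrimePow q)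
    (K : Type*) [Field K] (hK : Nat.card K = q ^ 2)
    (d : ℕ) (A : Matrix (Fin d) (Fin d) K)
    (hA : IsUnit A) (hherm : (A.map (· ^ q)).transpose = A) :
    (∃ S : Matrix (Fin d) (Fin d) K, IsUnit S ∧ S * A * (S.map (· ^ q)).transpose = 1) ∧
    ∀ B C : Matrix (Fin d) (Fin d) K, IsUnit B → IsUnit C →
      (B.map (· ^ q)).transpose = B → (C.map (· ^ q)).transpose = C →
      ∃ S : Matrix (Fin d) (Fin d) K, IsUnit S ∧ S * B * (S.map (· ^ q)).transpose = C := by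
  classical
  obtain ⟨p, n, hp, hn, rfl⟩ := hq
  have hp' : p.Prime := Nat.prime_iff.mpr hp
  haveI := Fact.mk hp'
  have hq2 : 2 ≤ p ^ n := Nat.one_lt_pow (by omega) hp'.two_le
  have hfin : Finite K := Nat.finite_of_card_ne_zero (by rw [hK]; positivity)
  haveI := Fintype.ofFinite K
  have hcard : Fintype.card K = (p ^ n) ^ 2 := by rw [← Nat.card_eq_fintype_card, hK]
  haveI hCK : CharP K (ringChar K) := ringChar.charP K
  have hrprime : (ringChar K).Prime := CharP.char_is_prime K (ringChar K)
  obtain ⟨m, hm⟩ := FiniteField.card K (ringChar K)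
  have hrp : ringChar K = p := by
    have hdvd : ringChar K ∣ (p ^ n) ^ 2 := by
      rw [← hcard, hm.2]
      exact dvd_pow_self _ (by positivity)
    exact (Nat.prime_dvd_prime_iff_eq hrprime hp').mp
      (hrprime.dvd_of_dvd_pow (hrprime.dvd_of_dvd_pow hdvd))
  haveI hCKp : CharP K p := hrp ▸ hCK
  set σ : K →+* K := iterateFrobenius K p n with hσdef
  have hfun : ((· ^ p ^ n) : K → K) = ⇑σ := funext fun x => (iterateFrobenius_def p n x).symm
  have hσapp : ∀ x : K, σ x = x ^ p ^ n := fun x => iterateFrobenius_def p n x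
  have hσσ : ∀ x : K, σ (σ x) = x := fun x => by
    rw [hσapp, hσapp, ← pow_mul,
      show p ^ n * p ^ n = Fintype.card K from by rw [hcard]; ring, FiniteField.pow_card]
  have hne : ∃ μ : K, σ μ ≠ μ := by
    obtain ⟨μ, hμ⟩ := exists_nonfixed hq2 hcard
    exact ⟨μ, by rwa [hσapp]⟩
  have hnorm : ∀ c : K, c ≠ 0 → σ c = c → ∃ l : K, l * σ l = c := by
    intro c hc0 hcσ
    obtain ⟨l, hl0, hl⟩ := norm_exists hq2 hcard c hc0 (by rwa [hσapp] at hcσ)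
    exact ⟨l, by rw [hσapp, ← hl, pow_succ, mul_comm]⟩
  simp only [hfun] at hherm ⊢
  obtain ⟨S, hS⟩ := exists_congr_one σ hσσ hne hnorm d A hA hherm
  constructor
  · exact ⟨S, unit_of_tri σ S A hS, hS⟩
  · intro B C hUB hUC hhB hhC
    obtain ⟨SB, hSB⟩ := exists_congr_one σ hσσ hne hnorm d B hUB hhB
    obtain ⟨SC, hSC⟩ := exists_congr_one σ hσσ hne hnorm d C hUC hhC
    obtain ⟨U, hU⟩ := unit_of_tri σ SC C hSC
    have h1 : (↑U⁻¹ : Matrix (Fin d) (Fin d) K) * SC = 1 := by rw [← hU]; exact U.inv_mul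
    have h2 : (SC.map σ).transpose * ((↑U⁻¹ : Matrix (Fin d) (Fin d) K).map σ).transpose = 1 := by
      rw [← adj_mul, h1, adj_one]
    refine ⟨(↑U⁻¹ : Matrix (Fin d) (Fin d) K) * SB,
      (Units.isUnit U⁻¹).mul (unit_of_tri σ SB B hSB), ?_⟩
    calc ((↑U⁻¹ : Matrix (Fin d) (Fin d) K) * SB) * B
          * ((((↑U⁻¹ : Matrix (Fin d) (Fin d) K) * SB)).map σ).transpose
        = ↑U⁻¹ * (SB * B * (SB.map σ).transpose)
            * ((↑U⁻¹ : Matrix (Fin d) (Fin d) K).map σ).transpose := by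
          rw [adj_mul]; simp only [mul_assoc]
      _ = ↑U⁻¹ * ((↑U⁻¹ : Matrix (Fin d) (Fin d) K).map σ).transpose := by
          rw [hSB, mul_one]
      _ = ↑U⁻¹ * (SC * C * (SC.map σ).transpose)
            * ((↑U⁻¹ : Matrix (Fin d) (Fin d) K).map σ).transpose := by
          rw [hSC, mul_one]
      _ = ((↑U⁻¹ : Matrix (Fin d) (Fin d) K) * SC) * C
            * ((SC.map σ).transpose * ((↑U⁻¹ : Matrix (Fin d) (Fin d) K).map σ).transpose) := by
          simp only [mul_assoc]
      _ = C := by rw [h1, h2, one_mul, mul_one]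
end

section
/- Let q be an odd prime power, and let A and B be invertible symmetric d × d matrices over the finite field 𝔽_q with q elements. Then there exists an invertible d × d matrix S over 𝔽_q with S·A·S^T = B if and only if det(A)·det(B) is a square in 𝔽_q (equivalently, det(A) and det(B) lie in the same square class). -/
open Matrix

section Aux

variable {F : Type*} [Field F]

/-- Congruence of square matrices. -/
def MCong {n : Type*} [Fintype n] [DecidableEq n] (A B : Matrix n n F) : Prop :=
  ∃ S : Matrix n n F, IsUnit S ∧ S * A * S.transpose = B

variable {n m : Type*} [Fintype n] [DecidableEq n] [Fintype m] [DecidableEq m]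

lemma mcong_refl (A : Matrix n n F) : MCong A A :=
  ⟨1, isUnit_one, by simp⟩

lemma mcong_of {A B : Matrix n n F} (hB : IsUnit B) (S : Matrix n n F)
    (h : S * A * S.transpose = B) : MCong A B := by
  refine ⟨S, ?_, h⟩
  rw [Matrix.isUnit_iff_isUnit_det] at hB ⊢
  have hd : S.det * A.det * S.det = B.det := by
    rw [← h, Matrix.det_mul, Matrix.det_mul, Matrix.det_transpose]
  rw [← hd] at hB
  exact isUnit_of_mul_isUnit_right hB

lemma mcong_isUnit {A B : Matrix n n F} (h : MCong A B) (hA : IsUnit A) : IsUnit B := by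
  obtain ⟨S, hS, rfl⟩ := h
  exact (hS.mul hA).mul ((Matrix.isUnit_iff_isUnit_det _).mpr (by
    rw [Matrix.det_transpose]
    exact ((Matrix.isUnit_iff_isUnit_det _).mp hS)))

lemma mcong_symm {A B : Matrix n n F} (hA : IsUnit A) (h : MCong A B) : MCong B A := by
  obtain ⟨S, hS, rfl⟩ := h
  have hSd : IsUnit S.det := (Matrix.isUnit_iff_isUnit_det _).mp hS
  have hSTd : IsUnit S.transpose.det := by rwa [Matrix.det_transpose]
  refine mcong_of hA S⁻¹ ?_
  rw [Matrix.transpose_nonsing_inv]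
  calc S⁻¹ * (S * A * S.transpose) * S.transpose⁻¹
      = (S⁻¹ * S) * A * (S.transpose * S.transpose⁻¹) := by
        simp only [Matrix.mul_assoc]
    _ = A := by rw [Matrix.nonsing_inv_mul _ hSd, Matrix.mul_nonsing_inv _ hSTd,
        Matrix.one_mul, Matrix.mul_one]

lemma mcong_trans {A B C : Matrix n n F} (h₁ : MCong A B) (h₂ : MCong B C) : MCong A C := by
  obtain ⟨S, hS, rfl⟩ := h₁
  obtain ⟨T, hT, rfl⟩ := h₂
  exact ⟨T * S, hT.mul hS, by simp only [Matrix.transpose_mul, Matrix.mul_assoc]⟩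

lemma mcong_reindex (e : m ≃ n) {A B : Matrix n n F} (h : MCong A B) :
    MCong (A.submatrix e e) (B.submatrix e e) := by
  obtain ⟨S, hS, rfl⟩ := h
  refine ⟨S.submatrix e e, ?_, ?_⟩
  · rw [Matrix.isUnit_iff_isUnit_det, Matrix.det_submatrix_equiv_self]
    exact (Matrix.isUnit_iff_isUnit_det _).mp hS
  · rw [Matrix.transpose_submatrix, Matrix.submatrix_mul_equiv, Matrix.submatrix_mul_equiv]

lemma mcong_fromBlocks {A B : Matrix n n F} {C D : Matrix m m F}
    (h₁ : MCong A B) (h₂ : MCong C D) :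
    MCong (Matrix.fromBlocks A 0 0 C) (Matrix.fromBlocks B 0 0 D) := by
  obtain ⟨S, hS, rfl⟩ := h₁
  obtain ⟨T, hT, rfl⟩ := h₂
  refine ⟨Matrix.fromBlocks S 0 0 T, ?_, ?_⟩
  · rw [Matrix.isUnit_iff_isUnit_det, Matrix.det_fromBlocks_zero₂₁]
    exact ((Matrix.isUnit_iff_isUnit_det _).mp hS).mul ((Matrix.isUnit_iff_isUnit_det _).mp hT)
  · simp [Matrix.fromBlocks_transpose, Matrix.fromBlocks_multiply]

lemma isSquare_sq_mul (x y : F) (hx : x ≠ 0) : IsSquare (x ^ 2 * y) ↔ IsSquare y := by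
  constructor
  · rintro ⟨r, hr⟩
    refine ⟨r / x, ?_⟩
    field_simp
    linear_combination hr
  · rintro ⟨r, rfl⟩
    exact ⟨x * r, by ring⟩

lemma mcong_det_sq {A B : Matrix n n F} (h : MCong A B) :
    ∃ u : F, u ≠ 0 ∧ B.det = u ^ 2 * A.det := by
  obtain ⟨S, hS, rfl⟩ := h
  refine ⟨S.det, ?_, by rw [Matrix.det_mul, Matrix.det_mul, Matrix.det_transpose]; ring⟩
  exact ((Matrix.isUnit_iff_isUnit_det _).mp hS).ne_zero

variable [Fintype F] [DecidableEq F]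

lemma exists_rep (hq : Fintype.card F % 2 = 1) (a b c : F) (ha : a ≠ 0) (hb : b ≠ 0) :
    ∃ x y : F, a * x ^ 2 + b * y ^ 2 = c := by
  obtain ⟨x, y, h⟩ := FiniteField.exists_root_sum_quadratic
    (f := Polynomial.C a * Polynomial.X ^ 2)
    (g := Polynomial.C b * Polynomial.X ^ 2 - Polynomial.C c)
    (Polynomial.degree_C_mul_X_pow 2 ha)
    (by
      rw [sub_eq_add_neg, ← Polynomial.C_neg]
      rw [Polynomial.degree_add_C]
      · exact Polynomial.degree_C_mul_X_pow 2 hb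
      · rw [Polynomial.degree_C_mul_X_pow 2 hb]; decide)
    hq
  simp only [Polynomial.eval_add, Polynomial.eval_sub, Polynomial.eval_mul, Polynomial.eval_pow,
    Polynomial.eval_C, Polynomial.eval_X] at h
  exact ⟨x, y, by linear_combination h⟩

lemma mcong_two (hq : Fintype.card F % 2 = 1) (a b c : F)
    (ha : a ≠ 0) (hb : b ≠ 0) (hc : c ≠ 0) :
    MCong (Matrix.diagonal ![a, b]) (Matrix.diagonal ![c, a * b * c]) := by
  obtain ⟨x, y, hxy⟩ := exists_rep hq a b c ha hb
  refine mcong_of ?_ !![x, y; -(b * y), a * x] ?_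
  · rw [Matrix.isUnit_iff_isUnit_det, Matrix.det_diagonal]
    simp only [isUnit_iff_ne_zero]
    simp [Fin.prod_univ_two, ha, hb, hc]
  · ext i j
    fin_cases i <;> fin_cases j
    · simp [Matrix.mul_apply, Fin.sum_univ_two, Matrix.vecMul, dotProduct,
        Matrix.vecHead, Matrix.vecTail, Matrix.diagonal_apply]
      linear_combination hxy
    · simp [Matrix.mul_apply, Fin.sum_univ_two, Matrix.vecMul, dotProduct,
        Matrix.vecHead, Matrix.vecTail, Matrix.diagonal_apply]
      ring
    · simp [Matrix.mul_apply, Fin.sum_univ_two, Matrix.vecMul, dotProduct,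
        Matrix.vecHead, Matrix.vecTail, Matrix.diagonal_apply]
      ring
    · simp [Matrix.mul_apply, Fin.sum_univ_two, Matrix.vecMul, dotProduct,
        Matrix.vecHead, Matrix.vecTail, Matrix.diagonal_apply]
      linear_combination (a * b) * hxy

end Aux

section Diag

variable {F : Type*} [Field F] [Fintype F] [DecidableEq F]


lemma mcong_diag_cons {d : ℕ} (a : F) {u u' : Fin d → F}
    (h : MCong (Matrix.diagonal u) (Matrix.diagonal u')) :
    MCong (Matrix.diagonal (Fin.cons a u)) (Matrix.diagonal (Fin.cons a u')) := by
  let E : Fin 1 ⊕ Fin d ≃ Fin (d + 1) := finSumFinEquiv.trans (finCongr (by omega))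
  have hEl : E (Sum.inl 0) = 0 := by
    apply Fin.ext
    simp [E, finSumFinEquiv]
  have hEr : ∀ j : Fin d, E (Sum.inr j) = Fin.succ j := by
    intro j
    apply Fin.ext
    simp [E, finSumFinEquiv] <;> omega
  have key : ∀ x : F, ∀ g : Fin d → F,
      Matrix.diagonal (Fin.cons x g : Fin (d + 1) → F) =
        (Matrix.fromBlocks (Matrix.diagonal ![x]) 0 0
          (Matrix.diagonal g)).submatrix E.symm E.symm := by
    intro x g
    rw [Matrix.fromBlocks_diagonal, Matrix.submatrix_diagonal_equiv]
    refine congrArg Matrix.diagonal (funext fun i => ?_)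
    rcases hsm : E.symm i with j | j
    · have hi : i = E (Sum.inl j) := by rw [← hsm, Equiv.apply_symm_apply]
      subst hi
      simp only [Function.comp_apply, Equiv.symm_apply_apply]
      have hj : j = 0 := Subsingleton.elim j 0
      subst hj
      rw [hEl]
      simp
    · have hi : i = E (Sum.inr j) := by rw [← hsm, Equiv.apply_symm_apply]
      subst hi
      simp only [Function.comp_apply, Equiv.symm_apply_apply]
      rw [hEr]
      simp
  rw [key a u, key a u']
  exact mcong_reindex E.symm (mcong_fromBlocks (mcong_refl _) h)

lemma mcong_diag (hq : Fintype.card F % 2 = 1) :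
    ∀ d (w v : Fin d → F), (∀ i, w i ≠ 0) → (∀ i, v i ≠ 0) →
      IsSquare ((∏ i, w i) * ∏ i, v i) →
      MCong (Matrix.diagonal w) (Matrix.diagonal v) := by
  intro d
  induction d with
  | zero =>
    intro w v _ _ _
    rw [Subsingleton.elim w v]
    exact mcong_refl _
  | succ d ih =>
    intro w v hw hv hsq
    -- first, arrange that the heads agree
    rcases d with _ | e
    · -- size 1
      obtain ⟨t, ht⟩ := hsq
      rw [Fin.prod_univ_one, Fin.prod_univ_one] at ht
      have ht0 : t ≠ 0 := by
        intro h0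
        rw [h0, mul_zero] at ht
        exact mul_ne_zero (hw 0) (hv 0) ht
      refine mcong_of ?_ (Matrix.diagonal fun _ => t / w 0) ?_
      · rw [Matrix.isUnit_iff_isUnit_det, Matrix.det_diagonal, Fin.prod_univ_one]
        exact isUnit_iff_ne_zero.mpr (hv 0)
      · rw [Matrix.diagonal_transpose, Matrix.diagonal_mul_diagonal,
          Matrix.diagonal_mul_diagonal]
        refine congrArg Matrix.diagonal (funext fun i => ?_)
        have hi : i = 0 := Fin.fin_one_eq_zero i
        subst hi
        have hw0 := hw 0
        field_simp
        (first
          | linear_combination ht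
          | linear_combination (2 : F) * ht
          | linear_combination (-2 : F) * ht
          | linear_combination -ht)
    · -- size e + 2
      set E : Fin 2 ⊕ Fin e ≃ Fin (e + 2) := finSumFinEquiv.trans (finCongr (by omega))
        with hE
      have hEl0 : E (Sum.inl 0) = 0 := by apply Fin.ext; simp [hE, finSumFinEquiv]
      have hEl1 : E (Sum.inl 1) = 1 := by apply Fin.ext; simp [hE, finSumFinEquiv]
      have hEr : ∀ j : Fin e, ((E (Sum.inr j) : Fin (e + 2)) : ℕ) = 2 + (j : ℕ) := by
        intro j
        simp [hE, finSumFinEquiv] <;> omega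
      set w' : Fin (e + 2) → F :=
        fun i => if i = 0 then v 0 else if i = 1 then w 0 * w 1 * v 0 else w i with hw'
      have hw'0 : w' 0 = v 0 := by simp [hw']
      have h10 : (1 : Fin (e + 2)) ≠ 0 := by
        intro hh
        rw [Fin.ext_iff, Fin.val_one, Fin.val_zero] at hh
        omega
      have hw'1 : w' 1 = w 0 * w 1 * v 0 := by
        simp only [hw']
        rw [if_neg h10]
        simp
      have hw'r : ∀ j : Fin e, w' (E (Sum.inr j)) = w (E (Sum.inr j)) := by
        intro j
        have h2 := hEr j
        simp only [hw']
        rw [if_neg (fun hh => by rw [hh, Fin.val_zero] at h2; omega),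
          if_neg (fun hh => by rw [hh, Fin.val_one] at h2; omega)]
      have hw'nz : ∀ i, w' i ≠ 0 := by
        intro i
        simp only [hw']
        split_ifs
        · exact hv 0
        · exact mul_ne_zero (mul_ne_zero (hw 0) (hw 1)) (hv 0)
        · exact hw i
      have hkey : ∀ u : Fin (e + 2) → F,
          Matrix.diagonal u = (Matrix.fromBlocks (Matrix.diagonal ![u 0, u 1]) 0 0
            (Matrix.diagonal fun j => u (E (Sum.inr j)))).submatrix E.symm E.symm := by
        intro u
        rw [Matrix.fromBlocks_diagonal, Matrix.submatrix_diagonal_equiv]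
        refine congrArg Matrix.diagonal (funext fun i => ?_)
        rcases hsm : E.symm i with j | j
        · have hi : i = E (Sum.inl j) := by rw [← hsm, Equiv.apply_symm_apply]
          subst hi
          simp only [Function.comp_apply, Equiv.symm_apply_apply]
          fin_cases j <;> simp [hEl0, hEl1]
        · have hi : i = E (Sum.inr j) := by rw [← hsm, Equiv.apply_symm_apply]
          subst hi
          simp only [Function.comp_apply, Equiv.symm_apply_apply]
          simp
      have step1 : MCong (Matrix.diagonal w) (Matrix.diagonal w') := by
        rw [hkey w, hkey w']
        apply mcong_reindex
        apply mcong_fromBlocks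
        · rw [show (![w' 0, w' 1]) = ![v 0, w 0 * w 1 * v 0] by rw [hw'0, hw'1]]
          exact mcong_two hq (w 0) (w 1) (v 0) (hw 0) (hw 1) (hv 0)
        · rw [show (fun j => w' (E (Sum.inr j))) = fun j => w (E (Sum.inr j)) from
            funext fun j => hw'r j]
          exact mcong_refl _
      obtain ⟨s, hs0, hsd⟩ := mcong_det_sq step1
      have hsq' : IsSquare ((∏ i, w' i) * ∏ i, v i) := by
        have hpw : (∏ i, w' i) = s ^ 2 * ∏ i, w i := by
          have := hsd
          rwa [Matrix.det_diagonal, Matrix.det_diagonal] at this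
        have hre : (∏ i, w' i) * ∏ i, v i = s ^ 2 * ((∏ i, w i) * ∏ i, v i) := by
          rw [hpw]; ring
        rw [hre]
        exact (isSquare_sq_mul _ _ hs0).mpr hsq
      refine mcong_trans step1 ?_
      -- now w' 0 = v 0; peel off the head
      have e1 : (∏ i, w' i) = w' 0 * ∏ i : Fin (e + 1), Fin.tail w' i := Fin.prod_univ_succ w'
      have e2 : (∏ i, v i) = v 0 * ∏ i : Fin (e + 1), Fin.tail v i := Fin.prod_univ_succ v
      have htail : IsSquare ((∏ i, Fin.tail w' i) * ∏ i, Fin.tail v i) := by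
        have hre : (∏ i, w' i) * ∏ i, v i =
            (v 0) ^ 2 * ((∏ i, Fin.tail w' i) * ∏ i, Fin.tail v i) := by
          rw [e1, e2, hw'0]; ring
        rw [hre] at hsq'
        exact (isSquare_sq_mul _ _ (hv 0)).mp hsq'
      have hrec := ih (Fin.tail w') (Fin.tail v)
        (fun i => hw'nz i.succ) (fun i => hv i.succ) htail
      have hcons := mcong_diag_cons (v 0) hrec
      rw [show Fin.cons (v 0) (Fin.tail w') = w' by rw [← hw'0]; exact Fin.cons_self_tail w',
        show Fin.cons (v 0) (Fin.tail v) = v from Fin.cons_self_tail v] at hcons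
      exact hcons

end Diag

section Diagonalize

variable {F : Type*} [Field F]

lemma exists_mcong_diagonal [Invertible (2 : F)] {d : ℕ} (A : Matrix (Fin d) (Fin d) F)
    (hA : IsUnit A) (hAs : A.transpose = A) :
    ∃ w : Fin d → F, (∀ i, w i ≠ 0) ∧ MCong A (Matrix.diagonal w) := by
  classical
  have hA' : ∀ i j, A j i = A i j := fun i j => congrFun (congrFun hAs i) j
  set Bf : LinearMap.BilinForm F (Fin d → F) := Matrix.toBilin' A with hBf
  have hsymm : Bf.IsSymm := by
    rw [LinearMap.BilinForm.isSymm_def]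
    intro x y
    simp only [RingHom.id_apply, hBf, Matrix.toBilin'_apply]
    rw [Finset.sum_comm]
    refine Finset.sum_congr rfl fun j _ => Finset.sum_congr rfl fun i _ => ?_
    rw [hA' j i]
    ring
  obtain ⟨c, hc⟩ := LinearMap.BilinForm.exists_orthogonal_basis (LinearMap.BilinForm.isSymm_iff.mp hsymm)
  have hrank : Module.finrank F (Fin d → F) = d := Module.finrank_fin_fun F
  let c' : Module.Basis (Fin d) F (Fin d → F) := c.reindex (finCongr hrank)
  have hc' : ∀ i j : Fin d, i ≠ j → Bf (c' i) (c' j) = 0 := by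
    intro i j hij
    simp only [c', Module.Basis.reindex_apply]
    exact hc (fun hab => hij ((finCongr hrank).symm.injective hab))
  let P : Matrix (Fin d) (Fin d) F := (Pi.basisFun F (Fin d)).toMatrix c'
  have hPA : P.transpose * A * P = LinearMap.BilinForm.toMatrix c' Bf := by
    have h := LinearMap.BilinForm.toMatrix_mul_basis_toMatrix (Pi.basisFun F (Fin d)) c' Bf
    rw [LinearMap.BilinForm.toMatrix_basisFun] at h
    rw [show LinearMap.BilinForm.toMatrix' Bf = A from
      LinearMap.BilinForm.toMatrix'_toBilin' A] at h
    exact h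
  have hD : LinearMap.BilinForm.toMatrix c' Bf =
      Matrix.diagonal (fun i => Bf (c' i) (c' i)) := by
    ext i j
    by_cases hij : i = j
    · subst hij
      simp [LinearMap.BilinForm.toMatrix_apply]
    · rw [LinearMap.BilinForm.toMatrix_apply, Matrix.diagonal_apply_ne _ hij]
      exact hc' i j hij
  have hP : IsUnit P := by
    have := (Pi.basisFun F (Fin d)).invertibleToMatrix c'
    exact isUnit_of_invertible P
  have hMC : MCong A (Matrix.diagonal fun i => Bf (c' i) (c' i)) := by
    refine ⟨P.transpose, ?_, ?_⟩
    · rw [Matrix.isUnit_iff_isUnit_det, Matrix.det_transpose]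
      exact (Matrix.isUnit_iff_isUnit_det _).mp hP
    · rw [Matrix.transpose_transpose, hPA, hD]
  refine ⟨_, ?_, hMC⟩
  intro i
  have hU : IsUnit (Matrix.diagonal fun i => Bf (c' i) (c' i)) := mcong_isUnit hMC hA
  rw [Matrix.isUnit_iff_isUnit_det, Matrix.det_diagonal, isUnit_iff_ne_zero] at hU
  intro h0
  exact hU (Finset.prod_eq_zero (Finset.mem_univ i) h0)

end Diagonalize

/-- Two invertible symmetric matrices over `𝔽_q` (`q` odd) are congruent if and only if the
product of their determinants is a square. -/
theorem symmetric_congruent_iff_det_mul_det_isSquare (q : ℕ) (hq : IsPrimePow q) (hodd : Odd q)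
    (F : Type*) [Field F] (hF : Nat.card F = q)
    (d : ℕ) (A B : Matrix (Fin d) (Fin d) F)
    (hA : IsUnit A) (hB : IsUnit B)
    (hAs : A.transpose = A) (hBs : B.transpose = B) :
    (∃ S : Matrix (Fin d) (Fin d) F, IsUnit S ∧ S * A * S.transpose = B) ↔
      IsSquare (A.det * B.det) := by
  constructor
  · rintro ⟨S, hS, hSAB⟩
    have hdet : B.det = S.det * A.det * S.det := by
      rw [← hSAB, Matrix.det_mul, Matrix.det_mul, Matrix.det_transpose]
    exact ⟨A.det * S.det, by rw [hdet]; ring⟩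
  · intro hsq
    have hq1 : 1 < q := hq.one_lt
    haveI : Finite F := Nat.finite_of_card_ne_zero (by omega)
    haveI : Fintype F := Fintype.ofFinite F
    classical
    have hcard : Fintype.card F % 2 = 1 := by
      rw [← Nat.card_eq_fintype_card, hF]
      exact Nat.odd_iff.mp hodd
    have hchar : ringChar F ≠ 2 := by
      intro h
      have := FiniteField.even_card_iff_char_two.mp h
      omega
    haveI : Invertible (2 : F) := invertibleOfNonzero (Ring.two_ne_zero hchar)
    obtain ⟨w, hw, hAw⟩ := exists_mcong_diagonal A hA hAs
    obtain ⟨v, hv, hBv⟩ := exists_mcong_diagonal B hB hBs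
    obtain ⟨s, hs0, hsd⟩ := mcong_det_sq hAw
    obtain ⟨t, ht0, htd⟩ := mcong_det_sq hBv
    have hsq2 : IsSquare ((∏ i, w i) * ∏ i, v i) := by
      have e1 : (∏ i, w i) = s ^ 2 * A.det := by
        rw [← Matrix.det_diagonal, hsd]
      have e2 : (∏ i, v i) = t ^ 2 * B.det := by
        rw [← Matrix.det_diagonal, htd]
      have hre : (∏ i, w i) * ∏ i, v i = (s * t) ^ 2 * (A.det * B.det) := by
        rw [e1, e2]; ring
      rw [hre]
      exact (isSquare_sq_mul _ _ (mul_ne_zero hs0 ht0)).mpr hsq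
    have h1 := mcong_diag hcard d w v hw hv hsq2
    exact mcong_trans hAw (mcong_trans h1 (mcong_symm hB hBv))
end
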